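/- arXiv:1207.2062 — 2 statements merged into one kernel-verified Lean document; each statement's English description precedes it below -/
import Mathlib

section
/- Let n, r, s be natural numbers and let N and R be real n×(r+s) matrices with columns indexed by Fin r ⊕ Fin s. Assume the first block of r columns of R is zero, NᵀN is invertible, and K := NᵀR has the block form fromBlocks 0 0 0 K⋆ where the s×s matrix K⋆ is symmetric and positive definite. Set K† := fromBlocks 0 0 0 K⋆⁻¹, P := I − N(NᵀN)⁻¹Nᵀ, and M := R K† Rᵀ + α P with α ≥ 0. Then M is symmetric and positive semidefinite, i.e. Mᵀ = M and xᵀ M x ≥ 0 for all x ∈ ℝⁿ. -/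
/-!
`R K† Rᵀ` is a congruence transform of `K†`, which is positive semidefinite because `K⋆⁻¹` is
positive definite. `P` is the complement of the orthogonal projector `N (NᵀN)⁻¹ Nᵀ`, hence a
Hermitian idempotent, so `P = Pᴴ P` is positive semidefinite. A nonnegative combination of
positive semidefinite matrices is positive semidefinite.
-/

open Matrix

namespace Matrix

section Ring

variable {R m n : Type*} [Ring R] [PartialOrder R] [StarRing R] [Fintype m] [Fintype n]

lemma PosSemidef.fromBlocks_zero_zero_zero [DecidableEq n] {D : Matrix n n R}
    (hD : D.PosSemidef) : (fromBlocks 0 0 0 D : Matrix (m ⊕ n) (m ⊕ n) R).PosSemidef := by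
  have hcongr : (fromCols (0 : Matrix n m R) 1)ᴴ * D * fromCols (0 : Matrix n m R) 1 =
      fromBlocks 0 0 0 D := by
    simp [conjTranspose_fromCols_eq_fromRows_conjTranspose, fromRows_mul,
      ← fromCols_fromRows_eq_fromBlocks, fromRows_zero]
  exact hcongr ▸ hD.conjTranspose_mul_mul_same _

lemma IsHermitian.posSemidef_of_isIdempotentElem [StarOrderedRing R] {P : Matrix n n R}
    (hP : P.IsHermitian) (hPP : IsIdempotentElem P) : P.PosSemidef := by
  simpa [hP.eq, hPP.eq] using posSemidef_conjTranspose_mul_self P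

end Ring

section Field

variable {K m n : Type*} [Field K] [StarRing K] [Fintype m] [Fintype n] [DecidableEq n]

lemma isHermitian_mul_inv_mul_conjTranspose (N : Matrix m n K) :
    (N * (Nᴴ * N)⁻¹ * Nᴴ).IsHermitian := by
  simpa using isHermitian_mul_mul_conjTranspose N (isHermitian_conjTranspose_mul_self N).inv

lemma isIdempotentElem_mul_inv_mul_conjTranspose (N : Matrix m n K) (hN : IsUnit (Nᴴ * N)) :
    IsIdempotentElem (N * (Nᴴ * N)⁻¹ * Nᴴ) := by
  have hinv : (Nᴴ * N)⁻¹ * (Nᴴ * N) = 1 := nonsing_inv_mul _ ((isUnit_iff_isUnit_det _).mp hN)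
  calc N * (Nᴴ * N)⁻¹ * Nᴴ * (N * (Nᴴ * N)⁻¹ * Nᴴ)
      = N * ((Nᴴ * N)⁻¹ * (Nᴴ * N)) * (Nᴴ * N)⁻¹ * Nᴴ := by simp only [Matrix.mul_assoc]
    _ = N * (Nᴴ * N)⁻¹ * Nᴴ := by rw [hinv, Matrix.mul_one]

lemma posSemidef_one_sub_mul_inv_mul_conjTranspose [PartialOrder K] [StarOrderedRing K]
    [DecidableEq m] (N : Matrix m n K) (hN : IsUnit (Nᴴ * N)) :
    (1 - N * (Nᴴ * N)⁻¹ * Nᴴ).PosSemidef :=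
  (isHermitian_one.sub (isHermitian_mul_inv_mul_conjTranspose N)).posSemidef_of_isIdempotentElem
    (IsIdempotentElem.one_sub_iff.mpr (isIdempotentElem_mul_inv_mul_conjTranspose N hN))

end Field

lemma posSemidef_iff_transpose_eq_and_dotProduct_mulVec_nonneg {R n : Type*} [Ring R]
    [PartialOrder R] [StarRing R] [TrivialStar R] [Fintype n] {M : Matrix n n R} : M.PosSemidef ↔ Mᵀ = M ∧ ∀ x, 0 ≤ x ⬝ᵥ M *ᵥ x := by
  simp [posSemidef_iff_dotProduct_mulVec, IsHermitian]

end Matrix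

theorem mimetic_psd_general (n r s : ℕ)
    (N R : Matrix (Fin n) (Fin r ⊕ Fin s) ℝ)
    (hNN : IsUnit (Nᵀ * N))
    (Kstar : Matrix (Fin s) (Fin s) ℝ)
    (hKpd : Kstar.PosDef)
    (α : ℝ) (hα : 0 ≤ α) :
    (R * (Matrix.fromBlocks 0 0 0 Kstar⁻¹ :
        Matrix (Fin r ⊕ Fin s) (Fin r ⊕ Fin s) ℝ) * Rᵀ
      + α • ((1 : Matrix (Fin n) (Fin n) ℝ) - N * (Nᵀ * N)⁻¹ * Nᵀ))ᵀ
      = R * (Matrix.fromBlocks 0 0 0 Kstar⁻¹ :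
        Matrix (Fin r ⊕ Fin s) (Fin r ⊕ Fin s) ℝ) * Rᵀ
      + α • ((1 : Matrix (Fin n) (Fin n) ℝ) - N * (Nᵀ * N)⁻¹ * Nᵀ) ∧
    ∀ x : Fin n → ℝ,
      0 ≤ x ⬝ᵥ (R * (Matrix.fromBlocks 0 0 0 Kstar⁻¹ :
          Matrix (Fin r ⊕ Fin s) (Fin r ⊕ Fin s) ℝ) * Rᵀ
        + α • ((1 : Matrix (Fin n) (Fin n) ℝ) - N * (Nᵀ * N)⁻¹ * Nᵀ)).mulVec x := by
  rw [← posSemidef_iff_transpose_eq_and_dotProduct_mulVec_nonneg]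
  have hKinv : (fromBlocks 0 0 0 Kstar⁻¹ : Matrix (Fin r ⊕ Fin s) (Fin r ⊕ Fin s) ℝ).PosSemidef :=
    hKpd.posSemidef.inv.fromBlocks_zero_zero_zero
  have hP := posSemidef_one_sub_mul_inv_mul_conjTranspose N hNN
  simp only [conjTranspose_eq_transpose_of_trivial] at hP
  simpa only [conjTranspose_eq_transpose_of_trivial] using
    (hKinv.mul_mul_conjTranspose_same R).add (hP.smul hα)

/-- Symmetry and positive semidefiniteness of the local mimetic stiffness matrix
`M = R K† Rᵀ + α P`. -/
theorem mimetic_psd (n r s : ℕ)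
    (N R : Matrix (Fin n) (Fin r ⊕ Fin s) ℝ)
    (hR0 : ∀ (i : Fin n) (j : Fin r), R i (Sum.inl j) = 0)
    (hNN : IsUnit (Nᵀ * N))
    (Kstar : Matrix (Fin s) (Fin s) ℝ)
    (hK : Nᵀ * R = Matrix.fromBlocks 0 0 0 Kstar)
    (hKsym : Kstar.IsSymm)
    (hKpd : Kstar.PosDef)
    (α : ℝ) (hα : 0 ≤ α) :
    (R * (Matrix.fromBlocks 0 0 0 Kstar⁻¹ :
        Matrix (Fin r ⊕ Fin s) (Fin r ⊕ Fin s) ℝ) * Rᵀ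
      + α • ((1 : Matrix (Fin n) (Fin n) ℝ) - N * (Nᵀ * N)⁻¹ * Nᵀ))ᵀ
      = R * (Matrix.fromBlocks 0 0 0 Kstar⁻¹ :
        Matrix (Fin r ⊕ Fin s) (Fin r ⊕ Fin s) ℝ) * Rᵀ
      + α • ((1 : Matrix (Fin n) (Fin n) ℝ) - N * (Nᵀ * N)⁻¹ * Nᵀ) ∧
    ∀ x : Fin n → ℝ,
      0 ≤ x ⬝ᵥ (R * (Matrix.fromBlocks 0 0 0 Kstar⁻¹ :
          Matrix (Fin r ⊕ Fin s) (Fin r ⊕ Fin s) ℝ) * Rᵀ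
        + α • ((1 : Matrix (Fin n) (Fin n) ℝ) - N * (Nᵀ * N)⁻¹ * Nᵀ)).mulVec x :=
  mimetic_psd_general n r s N R hNN Kstar hKpd α hα
end

section
/- Let m, d be natural numbers and let N̄ and R̄ be real m×d matrices. Assume that N̄ᵀN̄ is invertible and that K̄ := N̄ᵀR̄ is symmetric and positive definite (hence invertible). Define P̄ := I − N̄(N̄ᵀN̄)⁻¹N̄ᵀ and, for α ≥ 0, M̄ := R̄ K̄⁻¹ R̄ᵀ + α P̄. Then M̄ N̄ = R̄, and M̄ is symmetric and positive semidefinite. -/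
/-!
`N̄ (N̄ᴴ N̄)⁻¹ N̄ᴴ` is a self-adjoint idempotent fixing the columns of `N̄`, hence so is
`P̄ = 1 - N̄ (N̄ᴴ N̄)⁻¹ N̄ᴴ`: it annihilates `N̄`, and `P̄ = P̄ᴴ P̄` is positive semidefinite.
Consistency reduces to `R̄ K̄⁻¹ R̄ᴴ N̄ = R̄ K̄⁻¹ K̄ᴴ = R̄`, and `R̄ K̄⁻¹ R̄ᴴ` is a congruence of the
positive semidefinite `K̄⁻¹`. Over `ℝ` the conjugate transpose is the transpose.
-/

open Matrix

namespace Matrix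

variable {m n 𝕜 : Type*} [Fintype m] [Fintype n]

theorem IsStarProjection.posSemidef [CommRing 𝕜] [PartialOrder 𝕜] [StarRing 𝕜]
    [StarOrderedRing 𝕜] {P : Matrix n n 𝕜} (hP : IsStarProjection P) : P.PosSemidef := by
  have hP' : Pᴴ * P = P := by rw [← star_eq_conjTranspose, hP.isSelfAdjoint.star_eq, hP.1.eq]
  exact hP' ▸ posSemidef_conjTranspose_mul_self P

variable [DecidableEq n]

section CommRing

variable [CommRing 𝕜] [StarRing 𝕜]

noncomputable def colProj (N : Matrix m n 𝕜) : Matrix m m 𝕜 := N * (Nᴴ * N)⁻¹ * Nᴴ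

theorem colProj_mul_self {N : Matrix m n 𝕜} (hN : IsUnit (Nᴴ * N)) : colProj N * N = N := by
  rw [colProj, Matrix.mul_assoc, Matrix.mul_assoc,
    nonsing_inv_mul _ ((isUnit_iff_isUnit_det _).mp hN), Matrix.mul_one]

theorem isStarProjection_colProj {N : Matrix m n 𝕜} (hN : IsUnit (Nᴴ * N)) :
    IsStarProjection (colProj N) where
  isIdempotentElem := by
    rw [IsIdempotentElem]
    nth_rw 2 [colProj]
    rw [← Matrix.mul_assoc, ← Matrix.mul_assoc, colProj_mul_self hN, colProj]
  isSelfAdjoint := by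
    rw [IsSelfAdjoint, star_eq_conjTranspose, colProj, conjTranspose_mul, conjTranspose_mul,
      conjTranspose_conjTranspose, conjTranspose_nonsing_inv, conjTranspose_mul,
      conjTranspose_conjTranspose, Matrix.mul_assoc]

theorem mul_nonsing_inv_mul_conjTranspose_mul {N R : Matrix m n 𝕜}
    (hK : (Nᴴ * R).IsHermitian) (hKu : IsUnit (Nᴴ * R)) :
    R * (Nᴴ * R)⁻¹ * Rᴴ * N = R := by
  have hRN : Rᴴ * N = Nᴴ * R := by
    rw [← hK.eq, conjTranspose_mul, conjTranspose_conjTranspose]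
  rw [Matrix.mul_assoc, hRN, Matrix.mul_assoc,
    nonsing_inv_mul _ ((isUnit_iff_isUnit_det _).mp hKu), Matrix.mul_one]

variable [DecidableEq m]

theorem one_sub_colProj_mul_self {N : Matrix m n 𝕜} (hN : IsUnit (Nᴴ * N)) :
    (1 - colProj N) * N = 0 := by
  rw [Matrix.sub_mul, Matrix.one_mul, colProj_mul_self hN, sub_self]

/-- `M̄ = R̄ K̄⁻¹ R̄ᴴ + α P̄`, with `K̄ = N̄ᴴ R̄` and `P̄ = 1 - colProj N̄`. -/
noncomputable def mimeticMatrix (N R : Matrix m n 𝕜) (α : 𝕜) : Matrix m m 𝕜 :=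
  R * (Nᴴ * R)⁻¹ * Rᴴ + α • (1 - colProj N)

theorem mimeticMatrix_mul {N R : Matrix m n 𝕜} {α : 𝕜} (hN : IsUnit (Nᴴ * N))
    (hK : (Nᴴ * R).IsHermitian) (hKu : IsUnit (Nᴴ * R)) : mimeticMatrix N R α * N = R := by
  rw [mimeticMatrix, Matrix.add_mul, Matrix.smul_mul, one_sub_colProj_mul_self hN, smul_zero,
    add_zero, mul_nonsing_inv_mul_conjTranspose_mul hK hKu]

end CommRing

section StarOrderedRing

variable [DecidableEq m] [CommRing 𝕜] [PartialOrder 𝕜] [StarRing 𝕜] [StarOrderedRing 𝕜]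

theorem posSemidef_mimeticMatrix {N R : Matrix m n 𝕜} {α : 𝕜} (hN : IsUnit (Nᴴ * N))
    (hK : (Nᴴ * R).PosSemidef) (hα : 0 ≤ α) : (mimeticMatrix N R α).PosSemidef :=
  (hK.inv.mul_mul_conjTranspose_same R).add
    (((isStarProjection_colProj hN).one_sub.posSemidef).smul hα)

end StarOrderedRing

end Matrix

theorem mimetic_shear_scalar_product_general (m d : ℕ)
    (Nb Rb : Matrix (Fin m) (Fin d) ℝ)
    (hNN : IsUnit (Nbᵀ * Nb))
    (hKpd : (Nbᵀ * Rb).PosDef)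
    (α : ℝ) (hα : 0 ≤ α) :
    (Rb * (Nbᵀ * Rb)⁻¹ * Rbᵀ
      + α • ((1 : Matrix (Fin m) (Fin m) ℝ) - Nb * (Nbᵀ * Nb)⁻¹ * Nbᵀ)) * Nb = Rb ∧
    (Rb * (Nbᵀ * Rb)⁻¹ * Rbᵀ
      + α • ((1 : Matrix (Fin m) (Fin m) ℝ) - Nb * (Nbᵀ * Nb)⁻¹ * Nbᵀ))ᵀ
      = Rb * (Nbᵀ * Rb)⁻¹ * Rbᵀ
      + α • ((1 : Matrix (Fin m) (Fin m) ℝ) - Nb * (Nbᵀ * Nb)⁻¹ * Nbᵀ) ∧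
    ∀ x : Fin m → ℝ,
      0 ≤ x ⬝ᵥ (Rb * (Nbᵀ * Rb)⁻¹ * Rbᵀ
        + α • ((1 : Matrix (Fin m) (Fin m) ℝ) - Nb * (Nbᵀ * Nb)⁻¹ * Nbᵀ)).mulVec x := by
  simp only [← conjTranspose_eq_transpose_of_trivial] at hNN hKpd ⊢
  have hM : (mimeticMatrix Nb Rb α).PosSemidef :=
    posSemidef_mimeticMatrix hNN hKpd.posSemidef hα
  refine ⟨mimeticMatrix_mul hNN hKpd.isHermitian hKpd.isUnit, hM.isHermitian, fun x => ?_⟩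
  rw [← star_trivial x]
  exact hM.dotProduct_mulVec_nonneg x

/-- The local matrix `M̄ = R̄ K̄⁻¹ R̄ᵀ + α P̄` of the mimetic scalar product on the
discrete shear space: consistency `M̄ N̄ = R̄`, symmetry and positive semidefiniteness. -/
theorem mimetic_shear_scalar_product (m d : ℕ)
    (Nb Rb : Matrix (Fin m) (Fin d) ℝ)
    (hNN : IsUnit (Nbᵀ * Nb))
    (hKsym : (Nbᵀ * Rb).IsSymm)
    (hKpd : (Nbᵀ * Rb).PosDef)
    (α : ℝ) (hα : 0 ≤ α) :
    (Rb * (Nbᵀ * Rb)⁻¹ * Rbᵀ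
      + α • ((1 : Matrix (Fin m) (Fin m) ℝ) - Nb * (Nbᵀ * Nb)⁻¹ * Nbᵀ)) * Nb = Rb ∧
    (Rb * (Nbᵀ * Rb)⁻¹ * Rbᵀ
      + α • ((1 : Matrix (Fin m) (Fin m) ℝ) - Nb * (Nbᵀ * Nb)⁻¹ * Nbᵀ))ᵀ
      = Rb * (Nbᵀ * Rb)⁻¹ * Rbᵀ
      + α • ((1 : Matrix (Fin m) (Fin m) ℝ) - Nb * (Nbᵀ * Nb)⁻¹ * Nbᵀ) ∧
    ∀ x : Fin m → ℝ,
      0 ≤ x ⬝ᵥ (Rb * (Nbᵀ * Rb)⁻¹ * Rbᵀ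
        + α • ((1 : Matrix (Fin m) (Fin m) ℝ) - Nb * (Nbᵀ * Nb)⁻¹ * Nbᵀ)).mulVec x :=
  mimetic_shear_scalar_product_general m d Nb Rb hNN hKpd α hα
end
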